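/- Let a : ℕ → ℝ be a sequence with a_n > 0 for all n such that (ln a_n)_n is completely alternating. Then for every integer N ≥ 0 and every real 0 ≤ r ≤ 1, the sequence (ln(a_n / a_{n+N}^r))_n = (ln a_n − r·ln a_{n+N})_n is completely alternating. -/
import Mathlib


/-- The `n`-th iterated forward difference of a sequence, evaluated at `k`. -/
noncomputable def fdiff (a : ℕ → ℝ) (n k : ℕ) : ℝ :=
  ∑ i ∈ Finset.range (n + 1), (-1 : ℝ) ^ i * (n.choose i : ℝ) * a (k + i)

/-- A sequence is completely alternating if all iterated forward differences of
order `n ≥ 1` are nonpositive. -/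
def CompletelyAlternating (a : ℕ → ℝ) : Prop :=
  ∀ n : ℕ, 1 ≤ n → ∀ k : ℕ, fdiff a n k ≤ 0

lemma fdiff_succ (a : ℕ → ℝ) (n k : ℕ) :
    fdiff a (n+1) k = fdiff a n k - fdiff a n (k+1) := by
  unfold fdiff
  have h1 : ∑ i ∈ Finset.range (n + 1), (-1 : ℝ) ^ i * (n.choose i : ℝ) * a (k + i)
      = ∑ i ∈ Finset.range (n + 2), (-1 : ℝ) ^ i * (n.choose i : ℝ) * a (k + i) := by
    rw [Finset.sum_range_succ (n := n + 1)]
    simp [Nat.choose_succ_self]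
  rw [h1, Finset.sum_range_succ' (n := n + 1), Finset.sum_range_succ' (n := n + 1),
    add_sub_right_comm, ← Finset.sum_sub_distrib]
  congr 1
  · apply Finset.sum_congr rfl
    intro i _
    have hc : ((n+1).choose (i+1) : ℝ) = (n.choose i : ℝ) + (n.choose (i+1) : ℝ) := by
      rw [Nat.choose_succ_succ]; push_cast; ring
    have ha' : k + (i + 1) = k + 1 + i := by omega
    rw [hc, ha']
    ring
  · simp

lemma fdiff_mono (a : ℕ → ℝ) (hCA : CompletelyAlternating a) (n : ℕ) (hn : 1 ≤ n)
    (k N : ℕ) : fdiff a n k ≤ fdiff a n (k + N) := by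
  induction N with
  | zero => simp
  | succ m ih =>
    refine ih.trans ?_
    have h := hCA (n+1) (by omega) (k + m)
    rw [fdiff_succ] at h
    have : k + (m + 1) = k + m + 1 := by omega
    rw [this]
    linarith

theorem stmt8 (a : ℕ → ℝ) (ha : ∀ n, 0 < a n)
    (hCA : CompletelyAlternating (fun n => Real.log (a n)))
    (N : ℕ) (r : ℝ) (hr0 : 0 ≤ r) (hr1 : r ≤ 1) :
    CompletelyAlternating (fun n => Real.log (a n) - r * Real.log (a (n + N))) := by
  intro n hn k
  set b : ℕ → ℝ := fun n => Real.log (a n) with hb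
  have hlin : fdiff (fun n => b n - r * b (n + N)) n k
      = fdiff b n k - r * fdiff b n (k + N) := by
    unfold fdiff
    rw [Finset.mul_sum, ← Finset.sum_sub_distrib]
    apply Finset.sum_congr rfl
    intro i _
    have : k + N + i = k + i + N := by omega
    rw [this]
    ring
  have h1 := hCA n hn k
  have h2 := fdiff_mono b hCA n hn k N
  calc fdiff (fun n => b n - r * b (n + N)) n k
      = fdiff b n k - r * fdiff b n (k + N) := hlin
    _ ≤ fdiff b n k - r * fdiff b n k := by nlinarith
    _ = (1 - r) * fdiff b n k := by ring
    _ ≤ 0 := mul_nonpos_of_nonneg_of_nonpos (by linarith) h1
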